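/- arXiv:math/0609716 — 3 statements merged into one kernel-verified Lean document; each statement's English description precedes it below -/
import Mathlib

section
/- For every positive integer n there exists a constant δ_n > 0 (depending only on n) such that for every integer d ≥ 2, every nonzero a ∈ ℤ/dℤ, and every subgroup H of (ℤ/dℤ)^× of index at most n, one has (1/|H|) Σ_{t ∈ H} ⟨ta/d⟩ > δ_n, where |H| is the cardinality of H. -/
open scoped BigOperators



open Polynomial in
lemma pow_lift_hensel {p : ℕ} (hp : p.Prime) {N : ℕ} (hN : 0 < N) (e : ℕ)
    {B c : ℤ} (hc : ¬ (p:ℤ) ∣ c)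
    (hdvd : (p:ℤ)^(2 * padicValNat p N + 1) ∣ (c^N - B)) :
    ∃ g : ZMod (p^e), IsUnit g ∧ g^N = (B : ZMod (p^e)) := by
  haveI : Fact p.Prime := ⟨hp⟩
  have hp1 : (1:ℝ) < p := by exact_mod_cast hp.one_lt
  set v := padicValNat p N with hv
  set a : ℤ_[p] := (c : ℤ_[p]) with haa
  have ha : ‖a‖ = 1 := by
    have h1 : ¬ ‖a‖ < 1 := by rw [haa, PadicInt.norm_int_lt_one_iff_dvd]; exact hc
    exact le_antisymm (PadicInt.norm_le_one a) (not_lt.mp h1)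
  have hNnorm : ‖(N : ℤ_[p])‖ = (p:ℝ)^(-(v:ℤ)) := by
    have hN0 : ((N:ℤ) : ℤ_[p]) ≠ 0 := by
      simp [Int.cast_injective]
      exact_mod_cast hN.ne'
    have h1 : ‖((N:ℤ) : ℤ_[p])‖ ≤ (p:ℝ)^(-(v:ℤ)) := by
      rw [PadicInt.norm_int_le_pow_iff_dvd]
      exact_mod_cast pow_padicValNat_dvd
    have h2 : ¬ ‖((N:ℤ) : ℤ_[p])‖ ≤ (p:ℝ)^(-((v+1:ℕ):ℤ)) := by
      rw [PadicInt.norm_int_le_pow_iff_dvd]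
      intro h
      exact pow_succ_padicValNat_not_dvd hN.ne' (by exact_mod_cast h)
    have hcast : ((N:ℤ) : ℤ_[p]) = (N : ℤ_[p]) := by push_cast; rfl
    rw [← hcast]
    rw [PadicInt.norm_eq_zpow_neg_valuation hN0] at h1 h2 ⊢
    have hw1 : (v:ℤ) ≤ ((N:ℤ) : ℤ_[p]).valuation := by
      by_contra hcon
      push_neg at hcon
      have := zpow_lt_zpow_right₀ hp1 (neg_lt_neg (by exact_mod_cast hcon : ((N:ℤ):ℤ_[p]).valuation < (v:ℤ)))
      linarith
    have hw2 : ((N:ℤ) : ℤ_[p]).valuation ≤ (v:ℤ) := by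
      by_contra hcon
      push_neg at hcon
      apply h2
      apply zpow_le_zpow_right₀ (le_of_lt hp1)
      have h3 : (v:ℤ) + 1 ≤ ((N:ℤ) : ℤ_[p]).valuation := Int.add_one_le_iff.mpr hcon
      have h4 : ((v+1:ℕ):ℤ) = (v:ℤ) + 1 := by push_cast; ring
      rw [h4]
      exact neg_le_neg h3
    have : ((N:ℤ) : ℤ_[p]).valuation = (v:ℤ) := le_antisymm hw2 hw1
    rw [this]
  set F : Polynomial ℤ_[p] := X^N - C ((B:ℤ_[p])) with hF
  have hFa : F.eval a = ((c^N - B : ℤ) : ℤ_[p]) := by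
    simp [hF, haa]
  have hFderiv : F.derivative = C ((N:ℤ_[p])) * X^(N-1) := by
    rw [hF]
    rw [derivative_sub, derivative_C, derivative_X_pow]
    simp
  have hFda : F.derivative.eval a = (N:ℤ_[p]) * a^(N-1) := by
    rw [hFderiv]; simp
  have hnormda : ‖F.derivative.eval a‖ = (p:ℝ)^(-(v:ℤ)) := by
    rw [hFda, norm_mul, norm_pow, ha, one_pow, mul_one, hNnorm]
  have hnormFa : ‖F.eval a‖ ≤ (p:ℝ)^(-((2*v+1:ℕ):ℤ)) := by
    rw [hFa, PadicInt.norm_int_le_pow_iff_dvd]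
    exact_mod_cast hdvd
  have hnorm : ‖F.eval a‖ < ‖F.derivative.eval a‖^2 := by
    rw [hnormda, ← zpow_natCast _ 2]
    rw [← zpow_mul]
    refine lt_of_le_of_lt hnormFa ?_
    apply zpow_lt_zpow_right₀ hp1
    push_cast
    omega
  obtain ⟨z, hz, hza, _, _⟩ := hensels_lemma hnorm
  have hzN : z^N = ((B:ℤ_[p])) := by
    simp [hF] at hz
    exact sub_eq_zero.mp hz
  have hzu : IsUnit z := by
    rw [PadicInt.isUnit_iff]
    have h1 : ‖z - a‖ < 1 := by
      refine lt_of_lt_of_le (hza.trans_le (le_of_eq hnormda)) ?_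
      have h5 := zpow_le_zpow_right₀ (le_of_lt hp1) (by omega : -(v:ℤ) ≤ 0)
      simpa using h5
    have h2 : ‖z - a‖ ≠ ‖a‖ := by rw [ha]; exact ne_of_lt h1
    calc ‖z‖ = ‖a + (z - a)‖ := by ring_nf
      _ = max ‖z-a‖ ‖a‖ := by
          rw [add_comm]
          exact PadicInt.norm_add_eq_max_of_ne h2
      _ = 1 := by rw [ha]; exact max_eq_right (le_of_lt h1)
  refine ⟨PadicInt.toZModPow e z, hzu.map _, ?_⟩
  rw [← map_pow, hzN, map_intCast]


open Finset Polynomial Pointwise in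
lemma waring_mod_p {p N : ℕ} (hp : p.Prime) (hN : 0 < N) (hpN : N*(N+2)+2 ≤ p)
    {J : ℕ} (hJ : N + 2 ≤ J) (x : ZMod p) :
    ∃ f : Fin J → (ZMod p)ˣ, ∑ i, ((f i : ZMod p))^N = x := by
  haveI : Fact p.Prime := ⟨hp⟩
  classical
  set A : Finset (ZMod p) := (univ.image fun y : ZMod p => y^N).erase 0 with hA
  have hA1 : (1 : ZMod p) ∈ A := by
    refine Finset.mem_erase.mpr ⟨one_ne_zero, ?_⟩
    exact Finset.mem_image.mpr ⟨1, Finset.mem_univ _, one_pow N⟩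
  have hAne : A.Nonempty := ⟨1, hA1⟩
  have hmemA : ∀ y ∈ A, ∃ u : (ZMod p)ˣ, ((u:ZMod p))^N = y := by
    intro y hy
    obtain ⟨hy0, hy'⟩ := Finset.mem_erase.mp hy
    obtain ⟨z, _, hz⟩ := Finset.mem_image.mp hy'
    have hz0 : z ≠ 0 := by rintro rfl; exact hy0 (by simpa [zero_pow hN.ne'] using hz.symm)
    exact ⟨(isUnit_iff_ne_zero.mpr hz0).unit, by rw [IsUnit.unit_spec]; exact hz⟩
  have hcardA : p ≤ N * (#A + 1) := by
    have h1 : Fintype.card (ZMod p) ≤ (X^N - C 0 : (ZMod p)[X]).natDegree *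
        #(univ.image fun y => eval y (X^N - C 0 : (ZMod p)[X])) := by
      apply FiniteField.card_image_polynomial_eval
      rw [map_zero, sub_zero, degree_X_pow]
      exact_mod_cast hN
    rw [map_zero, sub_zero, natDegree_X_pow] at h1
    have h2 : (univ.image fun y => eval y (X^N : (ZMod p)[X])) =
        (univ.image fun y : ZMod p => y^N) := by simp
    rw [h2, ZMod.card] at h1
    have h3 : #(univ.image fun y : ZMod p => y^N) - 1 ≤ #A :=
      Finset.pred_card_le_card_erase
    have h4 : 0 < #(univ.image fun y : ZMod p => y^N) :=
      Finset.card_pos.mpr ⟨1, Finset.mem_image.mpr ⟨1, Finset.mem_univ _, one_pow N⟩⟩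
    calc p ≤ N * #(univ.image fun y : ZMod p => y^N) := h1
      _ ≤ N * (#A + 1) := Nat.mul_le_mul_left _ (by omega)
  have hAbig : N + 2 ≤ #A := by
    by_contra hcon
    push_neg at hcon
    have h5 : N * (#A+1) ≤ N * (N+2) := Nat.mul_le_mul_left N (by omega)
    linarith
  obtain ⟨b, hbA⟩ : ∃ b, #A = b + 1 := ⟨#A - 1, by omega⟩
  have hbN : N + 1 ≤ b := by omega
  set T : ℕ → Finset (ZMod p) := fun k => Nat.rec A (fun _ S => S + A) k with hT
  have hT0 : T 0 = A := rfl
  have hTs : ∀ k, T (k+1) = T k + A := fun k => rfl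
  have hTne : ∀ k, (T k).Nonempty := by
    intro k; induction k with
    | zero => exact hAne
    | succ k ih => rw [hTs]; exact ih.add hAne
  have hcard : ∀ k, min p (k * b + b + 1) ≤ #(T k) := by
    intro k; induction k with
    | zero =>
      rw [hT0]
      refine le_trans (min_le_right _ _) ?_
      omega
    | succ k ih =>
      have h1 := ZMod.cauchy_davenport hp (hTne k) hAne
      rw [← hTs] at h1
      rcases min_le_iff.mp h1 with h2 | h2
      · exact min_le_iff.mpr (Or.inl h2)
      · have h2' : #(T k) + b ≤ #(T (k+1)) := by omega
        rcases le_or_gt p (k * b + b + 1) with h3 | h3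
        · rw [min_eq_left h3] at ih
          exact min_le_iff.mpr (Or.inl (by omega))
        · rw [min_eq_right (le_of_lt h3)] at ih
          have hmul : (k+1) * b = k * b + b := by ring
          refine min_le_iff.mpr (Or.inr ?_)
          linarith
  have hfull : T (N+1) = univ := by
    apply Finset.eq_univ_of_card
    rw [ZMod.card]
    have h2 : p ≤ (N+1) * b + b + 1 := by
      have h5 : N * (#A + 1) = N*b + 2*N := by rw [hbA]; ring
      have h7 : (N+1)*b = N*b + b := by ring
      linarith [hcardA]
    have h1 := hcard (N+1)
    rw [min_eq_left h2] at h1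
    have h4 : #(T (N+1)) ≤ p := by
      simpa [ZMod.card] using Finset.card_le_univ (T (N+1))
    omega
  have hcov : ∀ k, T (N+1+k) = univ := by
    intro k; induction k with
    | zero => exact hfull
    | succ k ih =>
      have h6 : T (N+1+k+1) = T (N+1+k) + A := hTs _
      rw [show N+1+(k+1) = N+1+k+1 from rfl, h6, ih]
      apply Finset.eq_univ_of_forall
      intro y
      exact Finset.mem_add.mpr ⟨y - 1, Finset.mem_univ _, 1, hA1, by ring⟩
  have hrep : ∀ k (y : ZMod p), y ∈ T k →
      ∃ f : Fin (k+1) → (ZMod p)ˣ, ∑ i, ((f i : ZMod p))^N = y := by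
    intro k; induction k with
    | zero =>
      intro y hy
      obtain ⟨u, hu⟩ := hmemA y hy
      exact ⟨fun _ => u, by simpa using hu⟩
    | succ k ih =>
      intro y hy
      rw [hTs] at hy
      obtain ⟨z, hz, w, hw, hzw⟩ := Finset.mem_add.mp hy
      obtain ⟨f, hf⟩ := ih z hz
      obtain ⟨u, hu⟩ := hmemA w hw
      refine ⟨Fin.cons u f, ?_⟩
      rw [Fin.sum_univ_succ]
      simp only [Fin.cons_zero, Fin.cons_succ]
      rw [hf, hu, add_comm]
      exact hzw
  obtain ⟨m, rfl⟩ : ∃ m, J = m + 1 := ⟨J - 1, by omega⟩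
  obtain ⟨j, rfl⟩ : ∃ j, m = N + 1 + j := ⟨m - (N+1), by omega⟩
  exact hrep _ x (by rw [hcov j]; exact Finset.mem_univ x)


lemma waring_mul {N J a b : ℕ} (hab : a.Coprime b)
    (ha : ∃ g : Fin J → (ZMod a)ˣ, ∑ i, ((g i : ZMod a))^N = -1)
    (hb : ∃ g : Fin J → (ZMod b)ˣ, ∑ i, ((g i : ZMod b))^N = -1) :
    ∃ g : Fin J → (ZMod (a*b))ˣ, ∑ i, ((g i : ZMod (a*b)))^N = -1 := by
  obtain ⟨g1, hg1⟩ := ha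
  obtain ⟨g2, hg2⟩ := hb
  let ψ : ZMod a × ZMod b ≃+* ZMod (a*b) := (ZMod.chineseRemainder hab).symm
  let u : Fin J → (ZMod a × ZMod b)ˣ := fun i => MulEquiv.prodUnits.symm (g1 i, g2 i)
  have hu : ∀ i, ((u i : ZMod a × ZMod b)) = ((g1 i : ZMod a), (g2 i : ZMod b)) := by
    intro i; rfl
  refine ⟨fun i => Units.map ψ.toRingHom.toMonoidHom (u i), ?_⟩
  have hcoe : ∀ i, ((Units.map ψ.toRingHom.toMonoidHom (u i) : (ZMod (a*b))ˣ) : ZMod (a*b))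
      = ψ ((u i : ZMod a × ZMod b)) := fun i => rfl
  simp only [hcoe, hu]
  have : ∑ i, ψ ((((g1 i : ZMod a), (g2 i : ZMod b)) : ZMod a × ZMod b))^N
      = ψ (∑ i, (((g1 i : ZMod a), (g2 i : ZMod b)) : ZMod a × ZMod b)^N) := by
    rw [map_sum]
    congr 1
    ext i
    rw [map_pow]
  rw [this]
  have hsum : (∑ i, (((g1 i : ZMod a), (g2 i : ZMod b)) : ZMod a × ZMod b)^N)
      = (-1 : ZMod a × ZMod b) := by
    have h3 : ∀ (x : ZMod a × ZMod b), x.1 = -1 → x.2 = -1 → x = -1 := by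
      intro x hx1 hx2
      ext
      · exact hx1
      · exact hx2
    apply h3
    · rw [Prod.fst_sum]
      simp only [Prod.pow_fst]
      exact hg1
    · rw [Prod.snd_sum]
      simp only [Prod.pow_snd]
      exact hg2
  rw [hsum, map_neg, map_one]


lemma waring_prime_pow {N : ℕ} (hN : 0 < N) {M : ℕ}
    (hM2 : N + 3 ≤ M)
    (hMdvd : ∀ p : ℕ, p.Prime → p ≤ N*(N+2)+2 → p^(2 * padicValNat p N + 1) ∣ M)
    {p e : ℕ} (hp : p.Prime) (he : 0 < e) :
    ∃ g : Fin (M-1) → (ZMod (p^e))ˣ, ∑ i, ((g i : ZMod (p^e)))^N = -1 := by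
  haveI : Fact p.Prime := ⟨hp⟩
  haveI : NeZero (p^e) := ⟨pow_ne_zero e hp.pos.ne'⟩
  obtain ⟨K, hK⟩ : ∃ K, M - 1 = K + 1 := ⟨M - 2, by omega⟩
  have hKM : (K : ℕ) = M - 2 := by omega
  by_cases h1 : (p:ℕ)^e ∣ M
  · -- all summands equal to 1
    refine ⟨fun _ => 1, ?_⟩
    simp only [Units.val_one, one_pow, Finset.sum_const, Finset.card_univ, Fintype.card_fin,
      nsmul_eq_mul, mul_one]
    have hM0 : ((M:ℕ) : ZMod (p^e)) = 0 := (ZMod.natCast_eq_zero_iff _ _).mpr h1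
    have hM1 : ((M - 1 : ℕ) : ZMod (p^e)) = ((M:ℕ) : ZMod (p^e)) - 1 := by
      have h9 : (1:ℕ) ≤ M := by omega
      push_cast [Nat.cast_sub h9]
      ring
    rw [hM1, hM0]
    ring
  rw [hK]
  by_cases h2 : p ≤ N*(N+2)+2
  · -- small prime: use 1 - M as the extra summand
    have hdvdM : (p:ℕ)^(2 * padicValNat p N + 1) ∣ M := hMdvd p hp h2
    have hdvd : ((p:ℤ))^(2 * padicValNat p N + 1) ∣ ((1:ℤ)^N - (1 - (M:ℤ))) := by
      simp only [one_pow]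
      have h9 : (1:ℤ) - (1 - (M:ℤ)) = (M:ℤ) := by ring
      rw [h9]
      exact_mod_cast Int.natCast_dvd_natCast.mpr hdvdM
    have hc : ¬ ((p:ℤ)) ∣ (1:ℤ) := by
      intro h
      have h8 := Int.le_of_dvd one_pos h
      have h7 := hp.two_le
      omega
    obtain ⟨g0, hg0u, hg0⟩ := pow_lift_hensel hp hN e hc hdvd
    refine ⟨Fin.cons hg0u.unit (fun _ => 1), ?_⟩
    rw [Fin.sum_univ_succ]
    simp only [Fin.cons_zero, Fin.cons_succ, IsUnit.unit_spec, Units.val_one, one_pow,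
      Finset.sum_const, Finset.card_univ, Fintype.card_fin, nsmul_eq_mul, mul_one]
    rw [hg0]
    have hcast : ((1 - (M:ℤ) : ℤ) : ZMod (p^e)) = 1 - ((M:ℕ) : ZMod (p^e)) := by
      push_cast
      ring
    rw [hcast, hKM]
    have hMcast : ((M - 2 : ℕ) : ZMod (p^e)) = ((M:ℕ) : ZMod (p^e)) - 2 := by
      have h9 : (2:ℕ) ≤ M := by omega
      push_cast [Nat.cast_sub h9]
      ring
    rw [hMcast]
    ring
  · -- large prime
    push_neg at h2
    have hpN : N*(N+2)+2 ≤ p := by omega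
    have hpnN : ¬ (p:ℕ) ∣ N := by
      intro h
      have h9 := Nat.le_of_dvd hN h
      nlinarith
    have hv0 : padicValNat p N = 0 := padicValNat.eq_zero_of_not_dvd hpnN
    have hJK : N + 2 ≤ K + 1 := by omega
    obtain ⟨c, hc⟩ := waring_mod_p hp hN hpN hJK (-1 : ZMod p)
    have hcop : ∀ i : Fin (K+1), Nat.Coprime ((c i : ZMod p)).val (p^e) :=
      fun i => (ZMod.val_coe_unit_coprime (c i)).pow_right e
    set w : Fin K → (ZMod (p^e))ˣ :=
      fun i => ZMod.unitOfCoprime ((c i.succ : ZMod p)).val (hcop i.succ) with hw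
    set s : ZMod (p^e) := ∑ i : Fin K, ((w i : ZMod (p^e)))^N with hs
    set b0 : ZMod (p^e) := -1 - s with hb0
    have hcast : ∀ i : Fin K, (ZMod.castHom (dvd_pow_self p he.ne') (ZMod p))
        ((w i : ZMod (p^e))) = (c i.succ : ZMod p) := by
      intro i
      simp only [hw, ZMod.coe_unitOfCoprime, map_natCast]
      exact ZMod.natCast_zmod_val _
    have hb0p : (ZMod.castHom (dvd_pow_self p he.ne') (ZMod p)) b0 = ((c 0 : ZMod p))^N := by
      rw [hb0, hs, map_sub, map_neg, map_one, map_sum]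
      have h9 : ∀ i : Fin K, (ZMod.castHom (dvd_pow_self p he.ne') (ZMod p))
          (((w i : ZMod (p^e)))^N) = ((c i.succ : ZMod p))^N := by
        intro i
        rw [map_pow, hcast i]
      rw [Finset.sum_congr rfl (fun i _ => h9 i)]
      rw [Fin.sum_univ_succ] at hc
      linear_combination -hc
    -- Hensel lift of b0
    have hc0 : ¬ ((p:ℤ)) ∣ (((c 0 : ZMod p)).val : ℤ) := by
      rw [Int.natCast_dvd_natCast]
      exact (Nat.Prime.coprime_iff_not_dvd hp).mp (ZMod.val_coe_unit_coprime (c 0)).symm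
    have hdvd : ((p:ℤ))^(2 * padicValNat p N + 1) ∣
        ((((c 0 : ZMod p)).val : ℤ)^N - (b0.val : ℤ)) := by
      rw [hv0]
      simp only [Nat.mul_zero, Nat.zero_add, pow_one]
      rw [← ZMod.intCast_zmod_eq_zero_iff_dvd]
      push_cast
      have e1 : ((((c 0 : ZMod p)).val : ℕ) : ZMod p) = (c 0 : ZMod p) :=
        ZMod.natCast_zmod_val _
      have e2 : (((b0.val : ℕ)) : ZMod p) = (ZMod.castHom (dvd_pow_self p he.ne') (ZMod p)) b0 := by
        conv_rhs => rw [← ZMod.natCast_zmod_val b0]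
        rw [map_natCast]
      rw [e1, e2, hb0p]
      ring
    obtain ⟨g0, hg0u, hg0⟩ := pow_lift_hensel hp hN e hc0 hdvd
    have hg0' : g0^N = b0 := by
      rw [hg0]
      push_cast
      exact ZMod.natCast_zmod_val b0
    refine ⟨Fin.cons hg0u.unit w, ?_⟩
    rw [Fin.sum_univ_succ]
    simp only [Fin.cons_zero, Fin.cons_succ, IsUnit.unit_spec]
    rw [hg0', hb0, ← hs]
    ring


lemma waring_all {N : ℕ} (hN : 0 < N) {M : ℕ} (hM2 : N + 3 ≤ M)
    (hMdvd : ∀ p : ℕ, p.Prime → p ≤ N*(N+2)+2 → p^(2 * padicValNat p N + 1) ∣ M) :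
    ∀ d : ℕ, d ≠ 0 → ∃ g : Fin (M-1) → (ZMod d)ˣ, ∑ i, ((g i : ZMod d))^N = -1 := by
  intro d
  induction d using Nat.recOnPosPrimePosCoprime with
  | prime_pow p n hpp hn => exact fun _ => waring_prime_pow hN hM2 hMdvd hpp hn
  | zero => exact fun h => absurd rfl h
  | one => exact fun _ => ⟨fun _ => 1, Subsingleton.elim _ _⟩
  | coprime a b ha hb hab iha ihb =>
      exact fun _ => waring_mul hab (iha (by omega)) (ihb (by omega))

lemma zmod_val_sum_le {d : ℕ} [NeZero d] {ι : Type*} (s : Finset ι) (f : ι → ZMod d) :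
    (∑ i ∈ s, f i).val ≤ ∑ i ∈ s, (f i).val := by
  induction s using Finset.cons_induction with
  | empty => simp
  | cons i s hi ih =>
      rw [Finset.sum_cons, Finset.sum_cons]
      exact le_trans (ZMod.val_add_le _ _) (by omega)

open scoped BigOperators

/-- For every positive integer `n` there is a constant `δ_n > 0` such that
for every integer `d ≥ 2`, every nonzero `a ∈ ℤ/dℤ`, and every subgroup `H ≤ (ℤ/dℤ)ˣ` of
index at most `n`, the average over `t ∈ H` of the fractional parts `⟨ta/d⟩` exceeds `δ_n`. -/
theorem fractional_part_average_pos (n : ℕ) (hn : 0 < n) :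
    ∃ δ : ℝ, 0 < δ ∧ ∀ d : ℕ, 2 ≤ d → ∀ a : ZMod d, a ≠ 0 →
      ∀ H : Subgroup (ZMod d)ˣ, H.index ≤ n →
        δ < (1 / (Nat.card H : ℝ)) *
              ∑ᶠ t ∈ (H : Set (ZMod d)ˣ), ((((t : ZMod d) * a)).val : ℝ) / d := by
  classical
  set N := n.factorial with hNdef
  have hN : 0 < N := n.factorial_pos
  set M := N^2 * Nat.factorial (N*(N+2)+2) with hMdef
  have hCfac : N*(N+2)+2 ≤ Nat.factorial (N*(N+2)+2) := Nat.self_le_factorial _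
  have hM2 : N + 3 ≤ M := by
    have h2 : N + 3 ≤ N*(N+2)+2 := by nlinarith
    exact le_trans h2 (le_trans hCfac (Nat.le_mul_of_pos_left _ (by positivity)))
  have hMdvd : ∀ p : ℕ, p.Prime → p ≤ N*(N+2)+2 → p^(2 * padicValNat p N + 1) ∣ M := by
    intro p hp hpC
    have h1 : p^(2 * padicValNat p N) ∣ N^2 := by
      have h2 : (p^(padicValNat p N))^2 ∣ N^2 := pow_dvd_pow_of_dvd pow_padicValNat_dvd 2
      rwa [← pow_mul, mul_comm] at h2
    have h3 : p ∣ Nat.factorial (N*(N+2)+2) := hp.dvd_factorial.mpr hpC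
    rw [pow_succ]
    exact mul_dvd_mul h1 h3
  refine ⟨1/(M+1 : ℝ), by positivity, ?_⟩
  intro d hd a ha H hHidx
  haveI : NeZero d := ⟨by omega⟩
  obtain ⟨g, hg⟩ := waring_all hN hM2 hMdvd d (by omega)
  have hHmem : ∀ i, (g i)^N ∈ H := by
    intro i
    have hidx0 : H.index ≠ 0 := Subgroup.index_ne_zero_of_finite
    obtain ⟨k, hk⟩ : H.index ∣ N := Nat.dvd_factorial (Nat.pos_of_ne_zero hidx0) hHidx
    rw [hk, pow_mul]
    exact Subgroup.pow_mem H (Subgroup.pow_index_mem H (g i)) k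
  -- t*a is nonzero for every unit t
  have hta : ∀ t : (ZMod d)ˣ, (t : ZMod d) * a ≠ 0 := by
    intro t h
    apply ha
    have h2 := congrArg (fun x => ((t⁻¹ : (ZMod d)ˣ) : ZMod d) * x) h
    simpa [← mul_assoc, ← Units.val_mul] using h2
  set sH : Finset (ZMod d)ˣ := (Set.toFinite (H : Set (ZMod d)ˣ)).toFinset with hsH
  have hmem : ∀ t : (ZMod d)ˣ, t ∈ sH ↔ t ∈ H := by
    intro t; rw [hsH, Set.Finite.mem_toFinset]; rfl
  set S : ℕ := ∑ t ∈ sH, (((t : ZMod d)) * a).val with hSdef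
  -- reindexing: multiplication by an element of H
  have hreindex : ∀ hh : (ZMod d)ˣ, hh ∈ H →
      ∑ t ∈ sH, ((((hh * t : (ZMod d)ˣ) : ZMod d)) * a).val = S := by
    intro hh hhH
    rw [hSdef]
    refine Finset.sum_nbij' (fun t => hh * t) (fun t => hh⁻¹ * t) ?_ ?_ ?_ ?_ ?_
    · intro t ht
      rw [hmem] at ht ⊢
      exact H.mul_mem hhH ht
    · intro t ht
      rw [hmem] at ht ⊢
      exact H.mul_mem (H.inv_mem hhH) ht
    · intro t _
      show hh⁻¹ * (hh * t) = t
      rw [← mul_assoc, inv_mul_cancel, one_mul]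
    · intro t _
      show hh * (hh⁻¹ * t) = t
      rw [← mul_assoc, mul_inv_cancel, one_mul]
    · intro t _; rfl
  -- the pairing identity
  have hpair : ∑ t ∈ sH, ((((t : ZMod d)) * a).val + (-(((t : ZMod d)) * a)).val)
      = sH.card * d := by
    have h0 : ∀ x ∈ sH, (((x : ZMod d)) * a).val + (-(((x : ZMod d)) * a)).val = d := by
      intro t _
      have h1 := ZMod.val_lt ((t : ZMod d) * a)
      have h2 : (-(((t : ZMod d)) * a)).val = d - (((t : ZMod d)) * a).val := by
        rw [ZMod.neg_val, if_neg (hta t)]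
      omega
    rw [Finset.sum_congr rfl h0, Finset.sum_const, smul_eq_mul]
  -- the key upper bound for the negated sum
  have hneg : ∑ t ∈ sH, (-(((t : ZMod d)) * a)).val ≤ (M-1) * S := by
    have hpt : ∀ t : (ZMod d)ˣ, (-(((t : ZMod d)) * a)).val
        ≤ ∑ i : Fin (M-1), (((g i : ZMod d))^N * ((t : ZMod d) * a)).val := by
      intro t
      have h1 : -(((t : ZMod d)) * a) = ∑ i : Fin (M-1), ((g i : ZMod d))^N * ((t : ZMod d) * a) := by
        rw [← Finset.sum_mul, hg]
        ring
      rw [h1]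
      exact zmod_val_sum_le _ _
    refine le_trans (Finset.sum_le_sum (fun t _ => hpt t)) ?_
    rw [Finset.sum_comm]
    have h2 : ∀ i : Fin (M-1), ∑ t ∈ sH, (((g i : ZMod d))^N * ((t : ZMod d) * a)).val = S := by
      intro i
      have h3 : ∀ t : (ZMod d)ˣ, ((g i : ZMod d))^N * ((t : ZMod d) * a)
          = (((g i ^ N * t : (ZMod d)ˣ) : ZMod d)) * a := by
        intro t
        rw [Units.val_mul, Units.val_pow_eq_pow_val, mul_assoc]
      rw [Finset.sum_congr rfl (fun t _ => by rw [h3 t])]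
      exact hreindex _ (hHmem i)
    rw [Finset.sum_congr rfl (fun i _ => h2 i), Finset.sum_const, Finset.card_univ,
      Fintype.card_fin, smul_eq_mul]
  have hkey : sH.card * d ≤ M * S := by
    rw [Finset.sum_add_distrib, ← hSdef] at hpair
    have hM1 : (M-1) + 1 = M := by omega
    nlinarith [hneg]
  have hSpos : 1 ≤ S := by
    by_contra h
    have : S = 0 := by omega
    rw [this, Nat.mul_zero] at hkey
    have h1 : (1:(ZMod d)ˣ) ∈ sH := (hmem 1).mpr H.one_mem
    have h2 : 0 < sH.card := Finset.card_pos.mpr ⟨1, h1⟩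
    nlinarith
  have hlt : sH.card * d < (M+1) * S := by nlinarith
  -- convert the goal
  have hcardH : Nat.card H = sH.card := by
    rw [hsH, ← Set.ncard_eq_toFinset_card _ (Set.toFinite _), ← Nat.card_coe_set_eq]
    rfl
  have hfs : ∑ᶠ t ∈ (H : Set (ZMod d)ˣ), ((((t : ZMod d) * a)).val : ℝ) / d
      = ∑ t ∈ sH, ((((t : ZMod d) * a)).val : ℝ) / d := by
    rw [← Set.Finite.coe_toFinset (Set.toFinite (H : Set (ZMod d)ˣ)), finsum_mem_coe_finset, hsH]
  rw [hfs, hcardH]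
  have hexp : (1 / (sH.card : ℝ)) * ∑ t ∈ sH, ((((t : ZMod d) * a)).val : ℝ) / d
      = (S:ℝ)/((sH.card : ℝ) * d) := by
    rw [← Finset.sum_div, ← Nat.cast_sum, ← hSdef]
    ring
  rw [hexp]
  have hcpos : 0 < sH.card := Finset.card_pos.mpr ⟨1, (hmem 1).mpr H.one_mem⟩
  have hltR : ((sH.card * d : ℕ):ℝ) < (((M+1)*S : ℕ):ℝ) := Nat.cast_lt.mpr hlt
  push_cast at hltR
  rw [div_lt_div_iff₀ (by positivity) (by positivity : (0:ℝ) < (sH.card : ℝ) * d)]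
  push_cast
  nlinarith [hltR]
end

section
/- There exists an absolute constant C > 0 with the following property: for all integers w ≥ 1 and d ≥ 2 and every tuple a = (a_0,…,a_{w+1}) ∈ A'_{d,w}, setting d_i = d / gcd(d, ã_i) where ã_i ∈ {0,…,d−1} is the representative of a_i, there exist two distinct indices i ≠ j with d_i ≥ C·log d and d_j ≥ C·log d. -/
/-!
Write `D_i` for the additive order of `a_i` in `ℤ/dℤ`. For every prime `p ∣ d`, the gcd
condition gives some `a_i` not divisible by `p`, so the full prime power `p ^ v_p(d)` divides
`D_i`. Since `a_i` is minus the sum of the other entries, `D_i` divides the lcm of the other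
orders, so `p ^ v_p(d)` divides a second order `D_j`. If at most one order were `≥ X`, every
`p ^ v_p(d)` would therefore be `< X`, whence `d ∣ lcm(1, …, ⌊X⌋)` and, by Chebyshev's bound
`ψ(X) = O(X)`, `log d = O(X)`. Taking `X = C log d` with `C` small is a contradiction.
-/

open Chebyshev

namespace Nat

theorem exists_pow_dvd_of_pow_dvd_finset_lcm {ι : Type*} {s : Finset ι} {f : ι → ℕ}
    (hf : ∀ i ∈ s, f i ≠ 0) {p k : ℕ} (hp : p.Prime) (hk : 0 < k) (h : p ^ k ∣ s.lcm f) :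
    ∃ i ∈ s, p ^ k ∣ f i := by
  have hlcm : s.lcm f ≠ 0 := by
    simpa only [ne_eq, Finset.lcm_eq_zero_iff, not_exists, not_and] using hf
  rw [hp.pow_dvd_iff_le_factorization hlcm, Finset.factorization_lcm hf,
    Finset.le_sup_iff hk] at h
  obtain ⟨i, hi, hle⟩ := h
  exact ⟨i, hi, (hp.pow_dvd_iff_le_factorization (hf i hi)).2 hle⟩

theorem ordProj_dvd_div_gcd_of_not_dvd {p n m : ℕ} (hp : p.Prime) (h : ¬ p ∣ m) :
    ordProj[p] n ∣ n / n.gcd m := by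
  have hcop : Coprime (ordProj[p] n) (n.gcd m) :=
    Coprime.pow_left _ (hp.coprime_iff_not_dvd.2 fun hpg => h (hpg.trans (n.gcd_dvd_right m)))
  refine hcop.dvd_of_dvd_mul_right ?_
  rw [Nat.div_mul_cancel (n.gcd_dvd_left m)]
  exact ordProj_dvd n p

theorem dvd_lcmUpto_of_forall_ordProj_le {n m : ℕ} (hn : n ≠ 0)
    (h : ∀ p ∈ n.primeFactors, ordProj[p] n ≤ m) : n ∣ lcmUpto m := by
  refine (factorization_le_iff_dvd hn (lcmUpto_ne_zero m)).1 fun p => ?_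
  by_cases hp : p ∈ n.primeFactors
  · have hprime := prime_of_mem_primeFactors hp
    rw [factorization_lcmUpto m hprime]
    exact le_log_of_pow_le hprime.one_lt (h p hp)
  · simp [Finsupp.notMem_support_iff.1 (support_factorization n ▸ hp)]

end Nat

theorem Chebyshev.log_le_psi_of_forall_ordProj_le {n : ℕ} {x : ℝ} (hn : n ≠ 0)
    (h : ∀ p ∈ n.primeFactors, ((ordProj[p] n : ℕ) : ℝ) ≤ x) : Real.log n ≤ ψ x := by
  have hdvd : n ∣ Nat.lcmUpto ⌊x⌋₊ :=
    Nat.dvd_lcmUpto_of_forall_ordProj_le hn fun p hp => Nat.le_floor (h p hp)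
  rw [psi_eq_psi_coe_floor, psi_eq_log_lcmUpto]
  exact Real.log_le_log (by positivity)
    (by exact_mod_cast Nat.le_of_dvd (Nat.lcmUpto_pos _) hdvd)

section AddOrder

variable {G ι : Type*} [AddCommGroup G] [DecidableEq ι] {s : Finset ι} {a : ι → G}

theorem addOrderOf_dvd_lcm_erase_of_sum_eq_zero (hs : ∑ j ∈ s, a j = 0) {i : ι} (hi : i ∈ s) :
    addOrderOf (a i) ∣ (s.erase i).lcm fun j => addOrderOf (a j) := by
  have hai : a i = -∑ j ∈ s.erase i, a j :=
    eq_neg_of_add_eq_zero_left (by rw [Finset.add_sum_erase s a hi, hs])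
  rw [addOrderOf_dvd_iff_nsmul_eq_zero, hai, smul_neg, Finset.smul_sum, neg_eq_zero]
  exact Finset.sum_eq_zero fun j hj =>
    addOrderOf_dvd_iff_nsmul_eq_zero.1 (Finset.dvd_lcm (f := fun j => addOrderOf (a j)) hj)

theorem exists_ne_pow_dvd_addOrderOf_of_sum_eq_zero [Finite G] (hs : ∑ j ∈ s, a j = 0)
    {i : ι} (hi : i ∈ s) {p k : ℕ} (hp : p.Prime) (hk : 0 < k) (h : p ^ k ∣ addOrderOf (a i)) :
    ∃ j ∈ s, j ≠ i ∧ p ^ k ∣ addOrderOf (a j) := by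
  obtain ⟨j, hj, hdvd⟩ := Nat.exists_pow_dvd_of_pow_dvd_finset_lcm
    (fun j _ => (addOrderOf_pos (a j)).ne') hp hk
    (h.trans (addOrderOf_dvd_lcm_erase_of_sum_eq_zero hs hi))
  exact ⟨j, Finset.mem_of_mem_erase hj, Finset.ne_of_mem_erase hj, hdvd⟩

end AddOrder

namespace ZMod

variable {n : ℕ} [NeZero n]

theorem addOrderOf_eq_div_gcd_val (x : ZMod n) : addOrderOf x = n / n.gcd x.val := by
  conv_lhs => rw [← natCast_zmod_val x]
  exact addOrderOf_coe _ (NeZero.ne n)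

variable {ι : Type*} [Fintype ι] {a : ι → ZMod n}

theorem exists_ordProj_dvd_addOrderOf (hgcd : n.gcd (Finset.univ.gcd fun i => (a i).val) = 1)
    {p : ℕ} (hp : p ∈ n.primeFactors) : ∃ i, ordProj[p] n ∣ addOrderOf (a i) := by
  have hprime := Nat.prime_of_mem_primeFactors hp
  obtain ⟨i, hi⟩ : ∃ i, ¬ p ∣ (a i).val := by
    by_contra! hall
    have : p ∣ n.gcd (Finset.univ.gcd fun i => (a i).val) :=
      Nat.dvd_gcd (Nat.dvd_of_mem_primeFactors hp) (Finset.dvd_gcd fun i _ => hall i)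
    exact hprime.one_lt.ne' (Nat.dvd_one.1 (hgcd ▸ this))
  exact ⟨i, addOrderOf_eq_div_gcd_val (a i) ▸ Nat.ordProj_dvd_div_gcd_of_not_dvd hprime hi⟩

theorem exists_ne_ordProj_dvd_addOrderOf [DecidableEq ι] (hsum : ∑ i, a i = 0)
    (hgcd : n.gcd (Finset.univ.gcd fun i => (a i).val) = 1) {p : ℕ} (hp : p ∈ n.primeFactors) :
    ∃ i j, i ≠ j ∧ ordProj[p] n ∣ addOrderOf (a i) ∧ ordProj[p] n ∣ addOrderOf (a j) := by
  have hprime := Nat.prime_of_mem_primeFactors hp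
  obtain ⟨i, hi⟩ := exists_ordProj_dvd_addOrderOf hgcd hp
  obtain ⟨j, -, hji, hj⟩ := exists_ne_pow_dvd_addOrderOf_of_sum_eq_zero hsum
    (Finset.mem_univ i) hprime
    (hprime.factorization_pos_of_dvd (NeZero.ne n) (Nat.dvd_of_mem_primeFactors hp)) hi
  exact ⟨i, j, hji.symm, hi, hj⟩

end ZMod

/-- There is an absolute constant `C > 0` such that for all `w ≥ 1`,
`d ≥ 2` and every tuple `a ∈ A'_{d,w}` (entries nonzero, summing to zero, with
`gcd(d, a_0, …, a_{w+1}) = 1`), at least two of the quantities `d_i = d/gcd(d, a_i)`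
are `≥ C·log d`. -/
theorem two_large_orders_in_Adw :
    ∃ C : ℝ, 0 < C ∧ ∀ w d : ℕ, 1 ≤ w → 2 ≤ d → ∀ a : Fin (w + 2) → ZMod d,
      (∀ i, a i ≠ 0) → (∑ i, a i = 0) →
      Nat.gcd d (Finset.univ.gcd fun i => (a i).val) = 1 →
      ∃ i j : Fin (w + 2), i ≠ j ∧
        C * Real.log d ≤ ((d / Nat.gcd d (a i).val : ℕ) : ℝ) ∧
        C * Real.log d ≤ ((d / Nat.gcd d (a j).val : ℕ) : ℝ) := by
  refine ⟨1 / 8, by norm_num, fun w d _ hd a _ hsum hgcd => ?_⟩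
  have : NeZero d := ⟨by omega⟩
  simp only [← ZMod.addOrderOf_eq_div_gcd_val]
  by_contra! hsmall
  have hprimePow : ∀ p ∈ d.primeFactors, ((ordProj[p] d : ℕ) : ℝ) ≤ 1 / 8 * Real.log d := by
    intro p hp
    obtain ⟨i, j, hij, hi, hj⟩ := ZMod.exists_ne_ordProj_dvd_addOrderOf hsum hgcd hp
    have hle : ∀ k, ordProj[p] d ∣ addOrderOf (a k) → ((ordProj[p] d : ℕ) : ℝ) ≤ addOrderOf (a k) :=
      fun k hk => by exact_mod_cast Nat.le_of_dvd (addOrderOf_pos _) hk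
    by_cases hbig : 1 / 8 * Real.log d ≤ addOrderOf (a i)
    · exact ((hle j hj).trans_lt (hsmall i j hij hbig)).le
    · exact (hle i hi).trans (not_le.1 hbig).le
  have hlog : 0 < Real.log d := Real.log_pos (by exact_mod_cast hd)
  have hlog4 : Real.log 4 < 3 := by
    linarith [Real.log_lt_sub_one_of_pos (x := 4) (by norm_num) (by norm_num)]
  have hpsi := (Chebyshev.log_le_psi_of_forall_ordProj_le (by omega) hprimePow).trans
    (psi_le_const_mul_self (by positivity))
  nlinarith
end

section
/- Let d be a positive integer, let ℓ be a prime with ℓ² | d, and let a ∈ ℤ/dℤ be an element whose representative ã ∈ {0,…,d−1} is not divisible by ℓ. Then Σ_{k=0}^{ℓ−1} ⟨(1 + k·(d/ℓ))·a / d⟩ = ⟨ā/(d/ℓ)⟩ + (ℓ−1)/2, where the products (1 + k·(d/ℓ))·a are computed in ℤ/dℤ, ā denotes the image of a in ℤ/(d/ℓ)ℤ, and ⟨c/m⟩ denotes ĉ/m with ĉ ∈ {0,…,m−1} the representative of c ∈ ℤ/mℤ. Moreover the set {1 + k·(d/ℓ) : 0 ≤ k < ℓ} is exactly the cyclic subgroup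 of (ℤ/dℤ)^× generated by 1 + d/ℓ. -/
/-!
Write `d = ℓ m` and `ã = q m + r` with `0 ≤ r < m`. Then `(1 + k m) ã ≡ r + m (q + k ã) (mod ℓ m)`,
so the representative of `(1 + k m) a` is `r + m ((q + k ã) mod ℓ)`. As `ℓ ∤ ã`, the residues
`(q + k ã) mod ℓ` for `k < ℓ` run through `0, …, ℓ - 1`, and the sum is `ℓ r / (ℓ m) + (ℓ - 1) / 2`.

Since `m² ≡ 0` and `ℓ m ≡ 0 (mod d)`, the powers of `u = 1 + m` are `u^k = 1 + k m`, and `u^ℓ = 1`.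
-/

open Finset

theorem Nat.one_add_mul_mul_mod_mul (ℓ m k A : ℕ) (hm : 0 < m) :
    (1 + k * m) * A % (ℓ * m) = A % m + m * ((A / m + k * A) % ℓ) := by
  have hexpand : (1 + k * m) * A = A + m * (k * A) := by ring
  rw [mul_comm ℓ m, Nat.mod_mul, hexpand, Nat.add_mul_mod_self_left, Nat.add_mul_div_left _ _ hm]

theorem sum_range_add_mul_mod_of_coprime {n A : ℕ} (c : ℕ) (hA : A.Coprime n) :
    ∑ k ∈ range n, (c + k * A) % n = ∑ j ∈ range n, j := by
  have hmaps : Set.MapsTo (fun k => (c + k * A) % n) (range n) (range n) := fun k hk =>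
    mem_range.2 (Nat.mod_lt _ (Nat.pos_of_ne_zero fun h => by simp [h] at hk))
  have hinj : Set.InjOn (fun k => (c + k * A) % n) (range n) := fun x hx y hy hxy =>
    ((Nat.ModEq.add_left_cancel' c hxy).cancel_right_of_coprime hA.symm).eq_of_lt_of_lt
      (mem_range.1 hx) (mem_range.1 hy)
  exact sum_nbij _ hmaps hinj (surjOn_of_injOn_of_card_le _ hmaps hinj le_rfl) fun _ _ => rfl

theorem ZMod.val_one_add_mul_mul {d ℓ m : ℕ} [NeZero d] (hdm : d = ℓ * m) (k : ℕ) (a : ZMod d) :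
    ((1 + (k : ZMod d) * m) * a).val = a.val % m + m * ((a.val / m + k * a.val) % ℓ) := by
  have hm : 0 < m := Nat.pos_of_mul_pos_left (hdm ▸ NeZero.pos d)
  have hcast : (1 + (k : ZMod d) * m) * a = (((1 + k * m) * a.val : ℕ) : ZMod d) := by
    push_cast
    rw [ZMod.natCast_zmod_val]
  rw [hcast, ZMod.val_natCast, ← Nat.one_add_mul_mul_mod_mul ℓ m k _ hm, ← hdm]

theorem sum_val_one_add_mul_mul_div {d ℓ m : ℕ} [NeZero d] (hdm : d = ℓ * m) (a : ZMod d)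
    (ha : a.val.Coprime ℓ) :
    ∑ k ∈ range ℓ, ((((1 + (k : ZMod d) * (m : ZMod d)) * a).val : ℚ) / d)
      = ((ZMod.cast a : ZMod m).val : ℚ) / m + (ℓ - 1) / 2 := by
  have hℓ : 0 < ℓ := Nat.pos_of_mul_pos_right (hdm ▸ NeZero.pos d)
  have : NeZero m := ⟨(Nat.pos_of_mul_pos_left (hdm ▸ NeZero.pos d)).ne'⟩
  have hres : (ZMod.cast a : ZMod m).val = a.val % m := by
    rw [ZMod.cast_eq_val, ZMod.val_natCast]
  have hsum : ∑ k ∈ range ℓ, ((1 + (k : ZMod d) * m) * a).val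
      = ℓ * (a.val % m) + m * ∑ j ∈ range ℓ, j := by
    simp only [ZMod.val_one_add_mul_mul hdm, sum_add_distrib, ← mul_sum,
      sum_range_add_mul_mod_of_coprime _ ha, sum_const, card_range, smul_eq_mul]
  have hgauss : (∑ j ∈ range ℓ, (j : ℚ)) * 2 = ℓ * (ℓ - 1) := by
    rw [← Nat.cast_sum, ← Nat.cast_pred hℓ]
    exact_mod_cast sum_range_id_mul_two ℓ
  rw [← sum_div, ← Nat.cast_sum, hsum, hres]
  have hm0 : (m : ℚ) ≠ 0 := Nat.cast_ne_zero.2 (NeZero.ne m)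
  push_cast [hdm]
  field_simp
  linear_combination (m : ℚ) * hgauss

theorem one_add_pow_of_mul_self_eq_zero {R : Type*} [CommRing R] {x : R} (hx : x * x = 0)
    (k : ℕ) : (1 + x) ^ k = 1 + k * x := by
  induction k with
  | zero => simp
  | succ k ih =>
    rw [pow_succ, ih]
    push_cast
    linear_combination (k : R) * hx

theorem mem_zpowers_iff_exists_lt_of_pow_eq_one {G : Type*} [Group G] {u g : G} {n : ℕ}
    (hn : 0 < n) (hu : u ^ n = 1) : g ∈ Subgroup.zpowers u ↔ ∃ k < n, u ^ k = g := by
  constructor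
  · rintro ⟨i, rfl⟩
    have hnz : (n : ℤ) ≠ 0 := by exact_mod_cast hn.ne'
    have hlt := Int.emod_lt_of_pos i (by omega : (0 : ℤ) < n)
    refine ⟨(i % n).toNat, by omega, ?_⟩
    rw [← zpow_natCast, Int.toNat_of_nonneg (Int.emod_nonneg i hnz)]
    exact (zpow_eq_zpow_emod' i hu).symm
  · rintro ⟨k, -, rfl⟩
    exact Subgroup.npow_mem_zpowers u k

theorem exists_unit_image_zpowers_one_add {R : Type*} [CommRing R] {x : R} (hx : x * x = 0)
    {n : ℕ} (hn : 0 < n) (hnx : (n : R) * x = 0) :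
    ∃ u : Rˣ, (u : R) = 1 + x ∧
      (((↑) : Rˣ → R) '' (Subgroup.zpowers u : Set Rˣ)) = {y | ∃ k : ℕ, k < n ∧ y = 1 + k * x} := by
  have hunit : IsUnit (1 + x) := IsNilpotent.isUnit_one_add ⟨2, by rw [pow_two, hx]⟩
  have hpow : ∀ k : ℕ, ((hunit.unit ^ k : Rˣ) : R) = 1 + k * x := fun k => by
    rw [Units.val_pow_eq_pow_val, IsUnit.unit_spec, one_add_pow_of_mul_self_eq_zero hx]
  have horder : hunit.unit ^ n = 1 := Units.ext <| by rw [hpow, hnx, add_zero, Units.val_one]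
  refine ⟨hunit.unit, hunit.unit_spec, Set.ext fun y => ?_⟩
  simp only [Set.mem_image, SetLike.mem_coe, mem_zpowers_iff_exists_lt_of_pow_eq_one hn horder]
  constructor
  · rintro ⟨_, ⟨k, hk, rfl⟩, rfl⟩
    exact ⟨k, hk, hpow k⟩
  · rintro ⟨k, hk, rfl⟩
    exact ⟨_, ⟨k, hk, rfl⟩, hpow k⟩

/-- If `ℓ² ∣ d` and `a ∈ ℤ/dℤ` has representative not divisible by `ℓ`,
then `Σ_{k=0}^{ℓ-1} ⟨(1 + k·(d/ℓ))·a/d⟩ = ⟨ā/(d/ℓ)⟩ + (ℓ-1)/2`, and the set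
`{1 + k·(d/ℓ) : 0 ≤ k < ℓ}` is the cyclic subgroup of `(ℤ/dℤ)ˣ` generated by `1 + d/ℓ`. -/
theorem fractional_part_sum_level_lowering (d ℓ : ℕ) (hd : 0 < d) (hℓ : ℓ.Prime)
    (hℓ2 : ℓ ^ 2 ∣ d) (a : ZMod d) (ha : ¬ ℓ ∣ a.val) :
    (∑ k ∈ Finset.range ℓ,
        ((((1 + (k : ZMod d) * ((d / ℓ : ℕ) : ZMod d)) * a).val : ℚ) / d)
      = (((ZMod.cast a : ZMod (d / ℓ)).val : ℚ) / (d / ℓ : ℕ) + (ℓ - 1) / 2)) ∧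
    ∃ u : (ZMod d)ˣ, (u : ZMod d) = 1 + ((d / ℓ : ℕ) : ZMod d) ∧
      (((↑) : (ZMod d)ˣ → ZMod d) '' (Subgroup.zpowers u : Set (ZMod d)ˣ))
        = {x : ZMod d | ∃ k : ℕ, k < ℓ ∧ x = 1 + (k : ZMod d) * ((d / ℓ : ℕ) : ZMod d)} := by
  have : NeZero d := ⟨hd.ne'⟩
  obtain ⟨t, ht⟩ := hℓ2
  have hm : d / ℓ = ℓ * t := by rw [ht, pow_two, mul_assoc, Nat.mul_div_cancel_left _ hℓ.pos]
  have hdm : d = ℓ * (d / ℓ) := by rw [hm, ht]; ring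
  refine ⟨sum_val_one_add_mul_mul_div hdm a (hℓ.coprime_iff_not_dvd.2 ha).symm,
    exists_unit_image_zpowers_one_add ?_ hℓ.pos ?_⟩
  · rw [← Nat.cast_mul, ZMod.natCast_eq_zero_iff, hm, ht]
    exact ⟨t, by ring⟩
  · rw [← Nat.cast_mul, ← hdm, ZMod.natCast_self]
end
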